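/- Let H be a real Hilbert space, K ⊆ H a convex set, u ∈ K, and ℓ a linear functional on H. Suppose φ₁, φ₂ ∈ H satisfy ⟨φ_j, v − u⟩ ≥ ℓ(v − u) for all v ∈ K and for j = 1,2, and suppose u − φ_j ∈ K and u + φ_j ∈ K for j = 1,2. Then φ₁ = φ₂. -/
import Mathlib

open scoped RealInnerProductSpace

/-- Let `H` be a real Hilbert space, `K ⊆ H` a convex set, `u ∈ K`, and `ℓ` a linear
functional on `H`.  Suppose `φ₁, φ₂ ∈ H` satisfy `⟨φⱼ, v − u⟩ ≥ ℓ(v − u)` for all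
`v ∈ K` and `j = 1,2`, and suppose `u − φⱼ ∈ K` and `u + φⱼ ∈ K` for `j = 1,2`.
Then `φ₁ = φ₂`.  (This abstract statement captures the uniqueness argument for the
Lagrange multiplier in the constrained mixed formulation.) -/
theorem statement7
    {H : Type*} [NormedAddCommGroup H] [InnerProductSpace ℝ H] [CompleteSpace H]
    (K : Set H) (hK : Convex ℝ K) (u : H) (hu : u ∈ K)
    (l : H →ₗ[ℝ] ℝ) (φ₁ φ₂ : H)
    (h1 : ∀ v ∈ K, l (v - u) ≤ ⟪φ₁, v - u⟫)
    (h2 : ∀ v ∈ K, l (v - u) ≤ ⟪φ₂, v - u⟫)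
    (hm1 : u - φ₁ ∈ K) (hp1 : u + φ₁ ∈ K)
    (hm2 : u - φ₂ ∈ K) (hp2 : u + φ₂ ∈ K) :
    φ₁ = φ₂ := by
  have ha := h1 (u + φ₂) hp2
  have hb := h1 (u - φ₂) hm2
  have hc := h2 (u + φ₁) hp1
  have hd := h2 (u - φ₁) hm1
  have he := h1 (u + φ₁) hp1
  have hf := h1 (u - φ₁) hm1
  have hg := h2 (u + φ₂) hp2
  have hh := h2 (u - φ₂) hm2
  simp only [add_sub_cancel_left, sub_sub_cancel_left, map_neg, inner_neg_right] at *
  have e1 : ⟪φ₁, φ₂⟫ = l φ₂ := le_antisymm (by linarith) ha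
  have e2 : ⟪φ₂, φ₁⟫ = l φ₁ := le_antisymm (by linarith) hc
  have e3 : ⟪φ₁, φ₁⟫ = l φ₁ := le_antisymm (by linarith) he
  have e4 : ⟪φ₂, φ₂⟫ = l φ₂ := le_antisymm (by linarith) hg
  have : ⟪φ₁ - φ₂, φ₁ - φ₂⟫ = 0 := by
    rw [inner_sub_sub_self]; linarith
  exact sub_eq_zero.mp (inner_self_eq_zero.mp this)
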